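/- For every nonzero real number a and every (x,y) ∈ ℝ², the map L̃ of Theorem 6.1 satisfies Im b(∂L̃/∂x, ∂L̃/∂y) = 0, i.e. ⟨i·∂L̃/∂x, ∂L̃/∂y⟩ = 0. Combined with horizontality, this expresses that the projected surface π∘L̃ in CP²₁(4) is Lagrangian. -/

import Mathlib

open Complex

/-- The index-one Hermitian form `b(z,w) = −conj z₁ · w₁ + conj z₂ · w₂ + conj z₃ · w₃`
on `ℂ³`, over which the pseudo-sphere `S⁵₂(1) = {z : b(z,z) = 1}` and the Hopf
fibration `π : S⁵₂(1) → CP²₁(4)` are defined. -/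
noncomputable def bSph (z w : ℂ × ℂ × ℂ) : ℂ :=
  -(starRingEnd ℂ z.1) * w.1 + (starRingEnd ℂ z.2.1) * w.2.1
    + (starRingEnd ℂ z.2.2) * w.2.2

/-- The horizontal lift `L̃ : ℝ² → ℂ³` of Theorem 6.1 (the timelike first
coordinate carries the `sinh` factor). -/
noncomputable def Lcp (a x y : ℝ) : ℂ × ℂ × ℂ :=
  ((1 / Real.sqrt 3 : ℝ) : ℂ) •
    (((Real.sqrt 2 : ℝ) : ℂ) * Complex.exp (Complex.I * ((x - a ^ 2 * y : ℝ) : ℂ) / (2 * (a : ℂ)))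
        * ((Real.sinh (Real.sqrt 3 * (x + a ^ 2 * y) / (2 * a)) : ℝ) : ℂ),
     Complex.exp (Complex.I * ((a ^ 2 * y - x : ℝ) : ℂ) / (a : ℂ)),
     ((Real.sqrt 2 : ℝ) : ℂ) * Complex.exp (Complex.I * ((x - a ^ 2 * y : ℝ) : ℂ) / (2 * (a : ℂ)))
        * ((Real.cosh (Real.sqrt 3 * (x + a ^ 2 * y) / (2 * a)) : ℝ) : ℂ))

/-! Write `L̃(x,y) = Φ(θ, σ)` with `θ = (x - a²y)/(2a)`, `σ = √3 (x + a²y)/(2a)` and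
`Φ(θ, σ) = liftProfile θ σ = (√2 e^{iθ} sinh σ, e^{-2iθ}, √2 e^{iθ} cosh σ) / √3`.
As `θ` and `σ` are affine in `(x, y)`, both partial derivatives of `L̃` are values of `dΦ` at real
vectors, and `b(dΦ u, dΦ v) = 2 u₁ v₁ - (2/3) u₂ v₂` is real: the phase `e^{iθ}` cancels against its
conjugate, and the imaginary cross terms of the first and third coordinates cancel because these
coordinates enter `b` with opposite signs. -/

noncomputable def liftProfile (θ σ : ℝ) : ℂ × ℂ × ℂ :=
  ((1 / Real.sqrt 3 : ℝ) : ℂ) •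
    (((Real.sqrt 2 : ℝ) : ℂ) * exp (θ * I) * (Real.sinh σ : ℂ),
     exp (-2 * θ * I),
     ((Real.sqrt 2 : ℝ) : ℂ) * exp (θ * I) * (Real.cosh σ : ℂ))

noncomputable def liftProfileTangent (θ σ dθ dσ : ℝ) : ℂ × ℂ × ℂ :=
  ((1 / Real.sqrt 3 : ℝ) : ℂ) •
    (((Real.sqrt 2 : ℝ) : ℂ) * exp (θ * I) * (dθ * I * (Real.sinh σ : ℂ) + dσ * (Real.cosh σ : ℂ)),
     -2 * dθ * I * exp (-2 * θ * I),
     ((Real.sqrt 2 : ℝ) : ℂ) * exp (θ * I) * (dθ * I * (Real.cosh σ : ℂ) + dσ * (Real.sinh σ : ℂ)))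

theorem HasDerivAt.liftProfile {θ σ : ℝ → ℝ} {dθ dσ t : ℝ} (hθ : HasDerivAt θ dθ t)
    (hσ : HasDerivAt σ dσ t) :
    HasDerivAt (fun s => liftProfile (θ s) (σ s)) (liftProfileTangent (θ t) (σ t) dθ dσ) t := by
  have hexp := (hθ.ofReal_comp.mul_const I).cexp
  have hexp2 := ((hθ.ofReal_comp.const_mul (-2 : ℂ)).mul_const I).cexp
  have hsinh := ((Real.hasDerivAt_sinh _).comp t hσ).ofReal_comp
  have hcosh := ((Real.hasDerivAt_cosh _).comp t hσ).ofReal_comp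
  refine ((((hexp.const_mul _).mul hsinh).prodMk
    (hexp2.prodMk ((hexp.const_mul _).mul hcosh))).const_smul ((1 / Real.sqrt 3 : ℝ) : ℂ)).congr_deriv ?_
  simp only [liftProfileTangent, Function.comp_apply, ofReal_mul, Prod.smul_mk]
  congr 2 <;> ring

theorem conj_exp_mul_exp_of_re_eq_zero {z : ℂ} (hz : z.re = 0) : starRingEnd ℂ (exp z) * exp z = 1 := by
  rw [← exp_conj, ← exp_add, ← re_add_im z, hz]
  simp [conj_ofReal]

theorem bSph_liftProfileTangent (θ σ dθ₁ dσ₁ dθ₂ dσ₂ : ℝ) :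
    bSph (liftProfileTangent θ σ dθ₁ dσ₁) (liftProfileTangent θ σ dθ₂ dσ₂) =
      ((2 * dθ₁ * dθ₂ - 2 / 3 * dσ₁ * dσ₂ : ℝ) : ℂ) := by
  have hk : ((1 / Real.sqrt 3 : ℝ) : ℂ) * ((1 / Real.sqrt 3 : ℝ) : ℂ) = 1 / 3 := by
    rw [← ofReal_mul]; field_simp; norm_num
  have hs : ((Real.sqrt 2 : ℝ) : ℂ) * ((Real.sqrt 2 : ℝ) : ℂ) = 2 := by
    rw [← ofReal_mul, Real.mul_self_sqrt (by norm_num)]; norm_num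
  have hC : ((Real.cosh σ : ℝ) : ℂ) ^ 2 - ((Real.sinh σ : ℝ) : ℂ) ^ 2 = 1 := by
    exact_mod_cast Real.cosh_sq_sub_sinh_sq σ
  have hU := conj_exp_mul_exp_of_re_eq_zero (z := θ * I) (by simp)
  have hV := conj_exp_mul_exp_of_re_eq_zero (z := -2 * θ * I) (by simp)
  have hrhs : ((2 * dθ₁ * dθ₂ - 2 / 3 * dσ₁ * dσ₂ : ℝ) : ℂ) =
      2 * (dθ₁ * dθ₂ : ℂ) - 2 / 3 * (dσ₁ * dσ₂ : ℂ) := by push_cast; ring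
  simp only [bSph, liftProfileTangent, Prod.smul_fst, Prod.smul_snd, smul_eq_mul, map_add, map_mul,
    map_neg, map_ofNat, conj_ofReal, conj_I, hrhs]
  set k : ℂ := ((1 / Real.sqrt 3 : ℝ) : ℂ)
  set s : ℂ := ((Real.sqrt 2 : ℝ) : ℂ)
  set U := starRingEnd ℂ (exp (θ * I)) * exp (θ * I)
  set V := starRingEnd ℂ (exp (-2 * θ * I)) * exp (-2 * θ * I)
  set p : ℂ := dθ₁ * dθ₂
  set q : ℂ := dσ₁ * dσ₂
  -- substitute `I² = -1`, `cosh² - sinh² = 1`, `U = V = 1`, `s² = 2`, `k² = 1/3` in turn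
  linear_combination (k * k * s * s * U * p * ((Real.sinh σ : ℂ) ^ 2 - (Real.cosh σ : ℂ) ^ 2)
      - 4 * k * k * p * V) * I_sq
    - k * k * s * s * U * (q - p) * hC + k * k * s * s * (p - q) * hU + 4 * k * k * p * hV
    + k * k * (p - q) * hs + (6 * p - 2 * q) * hk

theorem Lcp_eq_liftProfile (a x y : ℝ) :
    Lcp a x y = liftProfile ((x - a ^ 2 * y) / (2 * a)) (Real.sqrt 3 * (x + a ^ 2 * y) / (2 * a)) := by
  simp only [Lcp, liftProfile]
  congr 4 <;> push_cast <;> ring_nf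

theorem hasDerivAt_Lcp_left (a x y : ℝ) :
    HasDerivAt (fun t => Lcp a t y) (liftProfileTangent ((x - a ^ 2 * y) / (2 * a))
      (Real.sqrt 3 * (x + a ^ 2 * y) / (2 * a)) (1 / (2 * a)) (Real.sqrt 3 / (2 * a))) x := by
  simp only [Lcp_eq_liftProfile]
  exact HasDerivAt.liftProfile (by simpa using ((hasDerivAt_id x).sub_const _).div_const (2 * a))
    (by simpa using (((hasDerivAt_id x).add_const _).const_mul _).div_const (2 * a))

theorem hasDerivAt_Lcp_right (a x y : ℝ) :
    HasDerivAt (fun t => Lcp a x t) (liftProfileTangent ((x - a ^ 2 * y) / (2 * a))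
      (Real.sqrt 3 * (x + a ^ 2 * y) / (2 * a)) (-a ^ 2 / (2 * a)) (Real.sqrt 3 * a ^ 2 / (2 * a))) y := by
  simp only [Lcp_eq_liftProfile]
  exact HasDerivAt.liftProfile
    (by simpa using (((hasDerivAt_id y).const_mul (a ^ 2)).const_sub x).div_const (2 * a))
    (by simpa using ((((hasDerivAt_id y).const_mul (a ^ 2)).const_add x).const_mul _).div_const (2 * a))

theorem Lcp_lagrangian_general (a : ℝ) :
    ∀ x y : ℝ,
      (bSph (deriv (fun t => Lcp a t y) x) (deriv (fun t => Lcp a x t) y)).im = 0 := by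
  intro x y
  rw [(hasDerivAt_Lcp_left a x y).deriv, (hasDerivAt_Lcp_right a x y).deriv,
    bSph_liftProfileTangent, ofReal_im]

/-- Theorem 6.1: `Im b(∂L̃/∂x, ∂L̃/∂y) = 0`, i.e. `⟨i·∂L̃/∂x, ∂L̃/∂y⟩ = 0`;
combined with horizontality this expresses that `π ∘ L̃` is Lagrangian in
`CP²₁(4)`. -/
theorem Lcp_lagrangian (a : ℝ) (ha : a ≠ 0) :
    ∀ x y : ℝ,
      (bSph (deriv (fun t => Lcp a t y) x) (deriv (fun t => Lcp a x t) y)).im = 0 :=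
  Lcp_lagrangian_general a
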